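/- Let k ≥ 1, n : Fin k → ℕ with n_i ≥ 1, and let ε be an allowable smoothing with conventions ε_0 = ε_{k+1} = 0. Let [m_1,...,m_j] be the sequence generated from [n] by ε per Definition 2.1. Then ∏_{t=1}^{j} (|m_t| - 1) = ∏_{i=1}^{k} δ_i, where δ_i = n_i - 1 + ε_{i-1} + ε_{i+1} if ε_i = 0 and δ_i = 1 if ε_i = 1. -/

import Mathlib

/-- The sign adjustment ∏_{j < i, ε_j = 1} (-1)^{n_j} from step 3 of Definition 2.1. -/
def cfSign (n ε : ℕ → ℕ) (i : ℕ) : ℤ :=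
  ∏ j ∈ (Finset.Ico 1 i).filter (fun j => ε j = 1), (-1 : ℤ) ^ (n j)

/-- The block of terms replacing n_i in Definition 2.1: if ε_i = 1, an alternating
sequence -2, 2, -2, ..., ±2 of length n_i - 1; if ε_i = 0, the single term
n_i + ε_{i-1} + ε_{i+1}; all terms multiplied by the sign adjustment. -/
def cfBlock (n ε : ℕ → ℕ) (i : ℕ) : List ℤ :=
  if ε i = 1 then
    (List.range (n i - 1)).map (fun t => cfSign n ε i * (-1) ^ (t + 1) * 2)
  else
    [cfSign n ε i * ((n i : ℤ) + (ε (i - 1) : ℤ) + (ε (i + 1) : ℤ))]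

/-- The continued fraction expansion generated from [n_1,...,n_k] by the smoothing ε
(Definition 2.1), with indices 1,...,k. -/
def cfGen (k : ℕ) (n ε : ℕ → ℕ) : List ℤ :=
  (List.range k).flatMap (fun i => cfBlock n ε (i + 1))

open Finset

lemma abs_cfSign (n ε : ℕ → ℕ) (i : ℕ) : |cfSign n ε i| = 1 := by
  rw [cfSign, abs_prod]
  exact prod_eq_one fun j _ => by simp [abs_pow]

lemma prod_map_abs_sub_one_cfBlock (n ε : ℕ → ℕ) (i : ℕ) :
    ((cfBlock n ε i).map (fun m => |m| - 1)).prod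
      = if ε i = 1 then 1 else (n i : ℤ) - 1 + (ε (i - 1) : ℤ) + (ε (i + 1) : ℤ) := by
  by_cases h : ε i = 1
  · simp only [cfBlock, h, if_true, List.map_map]
    refine List.prod_eq_one fun x hx => ?_
    obtain ⟨t, -, rfl⟩ := List.mem_map.mp hx
    simp [abs_mul, abs_cfSign, abs_pow]
  · simp only [cfBlock, h, if_false, List.map_cons, List.map_nil, List.prod_cons, List.prod_nil,
      mul_one, abs_mul, abs_cfSign, one_mul]
    rw [abs_of_nonneg (by positivity)]
    ring

lemma prod_map_abs_sub_one_cfGen (k : ℕ) (n ε : ℕ → ℕ) :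
    ((cfGen k n ε).map (fun m => |m| - 1)).prod
      = ∏ i ∈ range k, ((cfBlock n ε (i + 1)).map (fun m => |m| - 1)).prod := by
  rw [cfGen, List.map_flatMap, List.flatMap_def, List.prod_flatten, List.map_map,
    prod_eq_multiset_prod, range_val, Multiset.range, Multiset.map_coe, Multiset.prod_coe]
  rfl

theorem stmt_6_general (k : ℕ) (n : ℕ → ℕ) (ε : ℕ → ℕ) :
    ((cfGen k n ε).map (fun m => |m| - 1)).prod
      = ∏ i ∈ Finset.Icc 1 k,
          (if ε i = 1 then 1
           else (n i : ℤ) - 1 + (ε (i - 1) : ℤ) + (ε (i + 1) : ℤ)) := by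
  rw [prod_map_abs_sub_one_cfGen, ← Ico_add_one_right_eq_Icc, prod_Ico_eq_prod_range,
    Nat.add_sub_cancel]
  refine prod_congr rfl fun i _ => ?_
  rw [prod_map_abs_sub_one_cfBlock, add_comm 1 i, Nat.add_sub_cancel]

/-- ∏_t (|m_t| - 1) over the generated sequence equals ∏_i δ_i, where
δ_i = n_i - 1 + ε_{i-1} + ε_{i+1} if ε_i = 0 and δ_i = 1 if ε_i = 1. -/
theorem stmt_6 (k : ℕ) (hk : 1 ≤ k) (n : ℕ → ℕ) (ε : ℕ → ℕ)
    (hn : ∀ i, 1 ≤ i → i ≤ k → 1 ≤ n i)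
    (hε01 : ∀ i, ε i = 0 ∨ ε i = 1)
    (hε0 : ε 0 = 0) (hεtop : ε (k + 1) = 0)
    (h1 : ∀ i, 1 ≤ i → i ≤ k → ε i = 1 → ε (i - 1) = 0 ∧ ε (i + 1) = 0)
    (h2 : ∀ i, 1 ≤ i → i ≤ k → n i = 1 → ε i = 0 → ε (i - 1) = 1 ∨ ε (i + 1) = 1) :
    ((cfGen k n ε).map (fun m => |m| - 1)).prod
      = ∏ i ∈ Finset.Icc 1 k,
          (if ε i = 1 then 1
           else (n i : ℤ) - 1 + (ε (i - 1) : ℤ) + (ε (i + 1) : ℤ)) :=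
  stmt_6_general k n ε
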